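/- arXiv:1612.00519 — 5 statements merged into one kernel-verified Lean document; each statement's English description precedes it below -/
import Mathlib

section
/- There exists a constant c > 0 such that every sequence of Leja points z₁, z₂, … on [−1,1] is well separated: for every n ≥ 2 and all 1 ≤ j, k ≤ n with j ≠ k one has |z_k − z_j| ≥ c · ρ_{1/n}(z_k), where ρ_{1/n}(z_k) is the distance (in ℂ) from z_k to the ellipse I_{1/n}. -/
/-- `z : ℕ → ℝ` (indices `1, 2, …`) is a sequence of Leja points on `[-1,1]`:
`z 1 ∈ [-1,1]` is arbitrary, and for `n ≥ 2`, `z n ∈ [-1,1]` maximizes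
`∏_{j=1}^{n-1} |y - z j|` over `y ∈ [-1,1]`. -/
def IsLejaSeq (z : ℕ → ℝ) : Prop :=
  z 1 ∈ Set.Icc (-1 : ℝ) 1 ∧
  ∀ n : ℕ, 2 ≤ n → z n ∈ Set.Icc (-1 : ℝ) 1 ∧
    ∀ y ∈ Set.Icc (-1 : ℝ) 1,
      ∏ j ∈ Finset.Ico 1 n, |y - z j| ≤ ∏ j ∈ Finset.Ico 1 n, |z n - z j|

/-- The ellipse `I_{1/n}` with foci `±1` and sum of semiaxes `1 + 1/n`, i.e. the image of
the circle `|w| = 1 + 1/n` under the Joukowski map `w ↦ (w + 1/w)/2`. -/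
def joukowskiEllipse (n : ℕ) : Set ℂ :=
  {ζ : ℂ | ∃ w : ℂ, ‖w‖ = 1 + 1 / (n : ℝ) ∧ ζ = (w + w⁻¹) / 2}

/-- `ρ_{1/n}(x)`: the distance in `ℂ` from `x ∈ [-1,1]` to the ellipse `I_{1/n}`. -/
noncomputable def rho (n : ℕ) (x : ℝ) : ℝ :=
  Metric.infDist (x : ℂ) (joukowskiEllipse n)


/-!
Write `z i = cos θᵢ` with `θᵢ ∈ [0, π]`. The trigonometric polynomial `∏_{i<m} (cos θ - z i)`
attains its maximal modulus at `θₘ` by Leja's rule and vanishes at every earlier `θₚ`. Its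
Joukowski lift is a self-reciprocal polynomial of degree `2(m - 1)`, so Cauchy's estimate on a
circle of radius `1 / (2(m - 1))` gives a Bernstein inequality, which forces
`|θₘ - θₚ| ≥ 1 / (6(m - 1))`. On the other side, the point `(w + w⁻¹) / 2` of `I_{1/n}` with
`w = (1 + 1/n) e^{iθ}` lies within `1 / (2n²) + sin θ / n` of `cos θ`, while
`|cos θ' - cos θ| = 2 sin ((θ + θ') / 2) sin (|θ' - θ| / 2)` dominates this bound once
`|θ' - θ| ≥ 1 / (6n)`.
-/

open Metric Set Finset

section Complex

open Complex

section SelfReciprocal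

variable {f : ℂ → ℂ} {C : ℝ}

lemma norm_le_of_forall_norm_eq_one_norm_le (hf : Differentiable ℂ f)
    (hC : ∀ w : ℂ, ‖w‖ = 1 → ‖f w‖ ≤ C) {ζ : ℂ} (hζ : ‖ζ‖ ≤ 1) : ‖f ζ‖ ≤ C := by
  refine norm_le_of_forall_mem_frontier_norm_le (U := ball 0 1) isBounded_ball hf.diffContOnCl
    (fun w hw => hC w ?_) ?_
  · rwa [frontier_ball 0 one_ne_zero, mem_sphere_zero_iff_norm] at hw
  · rwa [closure_ball 0 one_ne_zero, mem_closedBall_zero_iff]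

variable {N : ℕ}

lemma norm_le_pow_mul_of_self_reciprocal (hf : Differentiable ℂ f)
    (hrec : ∀ ζ : ℂ, ζ ≠ 0 → f ζ = ζ ^ N * f ζ⁻¹) (hC : ∀ w : ℂ, ‖w‖ = 1 → ‖f w‖ ≤ C)
    {ζ : ℂ} (hζ : 1 ≤ ‖ζ‖) : ‖f ζ‖ ≤ ‖ζ‖ ^ N * C := by
  have hζ₀ : ζ ≠ 0 := norm_pos_iff.1 (one_pos.trans_le hζ)
  rw [hrec ζ hζ₀, norm_mul, norm_pow]
  gcongr
  refine norm_le_of_forall_norm_eq_one_norm_le hf hC ?_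
  rw [norm_inv]
  exact inv_le_one_of_one_le₀ hζ

/-- On the circle of radius `1 / N` around `w`, `‖f‖ ≤ (1 + 1 / N) ^ N * C ≤ e * C`; apply
Cauchy's estimate there. -/
lemma norm_deriv_le_of_self_reciprocal (hf : Differentiable ℂ f)
    (hrec : ∀ ζ : ℂ, ζ ≠ 0 → f ζ = ζ ^ N * f ζ⁻¹) (hC : ∀ w : ℂ, ‖w‖ = 1 → ‖f w‖ ≤ C)
    (hN : 0 < N) {w : ℂ} (hw : ‖w‖ = 1) : ‖deriv f w‖ ≤ 3 * N * C := by
  have hC₀ : 0 ≤ C := (norm_nonneg _).trans (hC w hw)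
  have hR : (0 : ℝ) < (N : ℝ)⁻¹ := by positivity
  have hsphere : ∀ ζ ∈ sphere w (N : ℝ)⁻¹, ‖f ζ‖ ≤ 3 * C := by
    intro ζ hζ
    have hζR : ‖ζ‖ ≤ 1 + (N : ℝ)⁻¹ := by
      calc ‖ζ‖ ≤ ‖w‖ + ‖ζ - w‖ := norm_le_norm_add_norm_sub' ζ w
        _ = 1 + (N : ℝ)⁻¹ := by rw [hw, ← dist_eq_norm, mem_sphere.1 hζ]
    rcases le_total ‖ζ‖ 1 with h | h
    · linarith [norm_le_of_forall_norm_eq_one_norm_le hf hC h]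
    · calc ‖f ζ‖ ≤ ‖ζ‖ ^ N * C := norm_le_pow_mul_of_self_reciprocal hf hrec hC h
        _ ≤ (1 + (N : ℝ)⁻¹) ^ N * C := by gcongr
        _ ≤ Real.exp 1 * C := by gcongr; exact Real.one_add_inv_pow_le_exp
        _ ≤ 3 * C := by gcongr; linarith [Real.exp_one_lt_d9]
  calc ‖deriv f w‖ ≤ 3 * C / (N : ℝ)⁻¹ :=
        norm_deriv_le_of_forall_mem_sphere_norm_le hR hf.diffContOnCl hsphere
    _ = 3 * N * C := by field_simp

end SelfReciprocal

section JoukowskiLift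

variable {ι : Type*} (s : Finset ι) (x : ι → ℝ)

/-- `(2w) ^ #s * ∏ ((w + w⁻¹) / 2 - x i)` with the denominators cleared. -/
def joukowskiLift (w : ℂ) : ℂ :=
  ∏ i ∈ s, (w ^ 2 - 2 * x i * w + 1)

lemma differentiable_joukowskiLift : Differentiable ℂ (joukowskiLift s x) :=
  Differentiable.fun_finsetProd fun _ _ => by fun_prop

lemma joukowskiLift_eq_pow_mul_inv {ζ : ℂ} (hζ : ζ ≠ 0) :
    joukowskiLift s x ζ = ζ ^ (2 * #s) * joukowskiLift s x ζ⁻¹ := by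
  have hfactor : ∀ i ∈ s, ζ ^ 2 * (ζ⁻¹ ^ 2 - 2 * x i * ζ⁻¹ + 1) = ζ ^ 2 - 2 * x i * ζ + 1 := by
    intro i _
    field_simp
    ring
  rw [joukowskiLift, ← prod_congr rfl hfactor, prod_mul_distrib, prod_const, ← pow_mul,
    joukowskiLift]

lemma norm_joukowskiLift_exp (θ : ℝ) :
    ‖joukowskiLift s x (exp (θ * I))‖ = 2 ^ #s * |∏ i ∈ s, (Real.cos θ - x i)| := by
  have hfactor : ∀ i ∈ s, exp (θ * I) ^ 2 - 2 * x i * exp (θ * I) + 1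
      = 2 * exp (θ * I) * (Real.cos θ - x i : ℝ) := by
    intro i _
    rw [exp_mul_I]
    push_cast
    linear_combination sin (θ : ℂ) ^ 2 * I_sq - sin_sq_add_cos_sq (θ : ℂ)
  rw [joukowskiLift, prod_congr rfl hfactor, prod_mul_distrib, ← ofReal_prod, norm_mul,
    norm_real, norm_prod]
  simp [norm_exp_ofReal_mul_I, abs_prod]

end JoukowskiLift

lemma abs_prod_cos_sub_le {ι : Type*} (s : Finset ι) (x : ι → ℝ) {M : ℝ}
    (hM : ∀ θ, |∏ i ∈ s, (Real.cos θ - x i)| ≤ M) (a b : ℝ) :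
    |∏ i ∈ s, (Real.cos b - x i)| ≤ |∏ i ∈ s, (Real.cos a - x i)| + 6 * #s * M * |b - a| := by
  rcases s.eq_empty_or_nonempty with rfl | hs
  · simp
  set B := joukowskiLift s x
  have hB := differentiable_joukowskiLift s x
  have hcircle : ∀ w : ℂ, ‖w‖ = 1 → ‖B w‖ ≤ 2 ^ #s * M := by
    intro w hw
    have hw_exp : exp (w.arg * I) = w := by simpa [hw] using norm_mul_exp_arg_mul_I w
    rw [← hw_exp, norm_joukowskiLift_exp]
    gcongr
    exact hM _
  have hderiv : ∀ θ : ℝ, HasDerivAt (fun θ : ℝ => B (exp (θ * I)))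
      (deriv B (exp (θ * I)) * (exp (θ * I) * I)) θ := by
    intro θ
    have hexp : HasDerivAt (fun θ : ℝ => exp (θ * I)) (exp (θ * I) * I) θ := by
      simpa using ((hasDerivAt_id (θ : ℂ)).mul_const I).cexp.comp_ofReal
    exact (hB _).hasDerivAt.comp θ hexp
  have hlip : ‖B (exp (b * I)) - B (exp (a * I))‖ ≤ 6 * #s * (2 ^ #s * M) * ‖b - a‖ := by
    refine convex_univ.norm_image_sub_le_of_norm_deriv_le
      (fun θ _ => (hderiv θ).differentiableAt) (fun θ _ => ?_) trivial trivial
    rw [(hderiv θ).deriv, norm_mul, norm_mul, norm_exp_ofReal_mul_I, norm_I, mul_one, mul_one]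
    have := norm_deriv_le_of_self_reciprocal hB
      (fun ζ hζ => joukowskiLift_eq_pow_mul_inv s x hζ) hcircle (by positivity)
      (norm_exp_ofReal_mul_I θ)
    push_cast at this
    linarith
  have := (norm_sub_norm_le _ _).trans hlip
  rw [norm_joukowskiLift_exp, norm_joukowskiLift_exp, Real.norm_eq_abs] at this
  have h2 : (0 : ℝ) < 2 ^ #s := by positivity
  nlinarith

lemma joukowski_ofReal_mul_exp (r θ : ℝ) :
    (r * exp (θ * I) + (r * exp (θ * I))⁻¹) / 2
      = ((r + r⁻¹) / 2 * Real.cos θ : ℝ) + ((r - r⁻¹) / 2 * Real.sin θ : ℝ) * I := by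
  have hexp_inv : (exp (θ * I))⁻¹ = Real.cos θ - Real.sin θ * I := by
    rw [← exp_neg, ← neg_mul, ← ofReal_neg, exp_mul_I, ← ofReal_cos, ← ofReal_sin, Real.cos_neg,
      Real.sin_neg]
    push_cast
    ring
  rw [mul_inv, hexp_inv, exp_mul_I]
  push_cast
  ring

lemma abs_add_inv_div_two_sub_one_le {t : ℝ} (ht : 0 ≤ t) :
    |(1 + t + (1 + t)⁻¹) / 2 - 1| ≤ t ^ 2 / 2 := by
  have hr : 0 < 1 + t := by linarith
  have h : (1 + t + (1 + t)⁻¹) / 2 - 1 = t ^ 2 / 2 / (1 + t) := by field_simp; ring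
  rw [h, abs_of_nonneg (by positivity)]
  exact div_le_self (by positivity) (by linarith)

lemma abs_sub_inv_div_two_le {t : ℝ} (ht : 0 ≤ t) : |(1 + t - (1 + t)⁻¹) / 2| ≤ t := by
  have hr : 0 < 1 + t := by linarith
  have h : (1 + t - (1 + t)⁻¹) / 2 = t * ((1 + t / 2) / (1 + t)) := by field_simp; ring
  rw [h, abs_of_nonneg (by positivity)]
  exact mul_le_of_le_one_right ht ((div_le_one hr).2 (by linarith))

lemma rho_cos_le (n : ℕ) (θ : ℝ) :
    rho n (Real.cos θ) ≤ (1 / n) ^ 2 / 2 + 1 / n * |Real.sin θ| := by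
  set t : ℝ := 1 / n
  have ht : 0 ≤ t := by positivity
  set w : ℂ := (1 + t : ℝ) * exp (θ * I)
  have hw : (w + w⁻¹) / 2 ∈ joukowskiEllipse n := by
    refine ⟨w, ?_, rfl⟩
    rw [norm_mul, norm_real, norm_exp_ofReal_mul_I, mul_one, Real.norm_of_nonneg (by positivity)]
  set α := (1 + t + (1 + t)⁻¹) / 2 - 1
  set β := (1 + t - (1 + t)⁻¹) / 2
  calc rho n (Real.cos θ) ≤ dist (Real.cos θ : ℂ) ((w + w⁻¹) / 2) := infDist_le_dist_of_mem hw
    _ = ‖((α * Real.cos θ : ℝ) : ℂ) + (β * Real.sin θ : ℝ) * I‖ := by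
      rw [dist_comm, dist_eq_norm, joukowski_ofReal_mul_exp]
      congr 1
      simp only [α, β]
      push_cast
      ring
    _ ≤ |α| * |Real.cos θ| + |β| * |Real.sin θ| := by
      refine (norm_add_le _ _).trans_eq ?_
      rw [norm_mul, norm_I, mul_one, norm_real, norm_real, Real.norm_eq_abs, Real.norm_eq_abs,
        abs_mul, abs_mul]
    _ ≤ t ^ 2 / 2 * 1 + t * |Real.sin θ| := by
      gcongr
      exacts [abs_add_inv_div_two_sub_one_le ht, Real.abs_cos_le_one θ, abs_sub_inv_div_two_le ht]
    _ = (1 / n) ^ 2 / 2 + 1 / n * |Real.sin θ| := by rw [mul_one]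

end Complex

open Real

namespace IsLejaSeq

variable {z : ℕ → ℝ}

lemma mem_Icc (hz : IsLejaSeq z) {i : ℕ} (hi : 1 ≤ i) : z i ∈ Icc (-1 : ℝ) 1 := by
  rcases (show i = 1 ∨ 2 ≤ i by omega) with rfl | hi
  · exact hz.1
  · exact (hz.2 i hi).1

lemma prod_abs_sub_pos (hz : IsLejaSeq z) {m : ℕ} (hm : 2 ≤ m) :
    0 < ∏ j ∈ Ico 1 m, |z m - z j| := by
  obtain ⟨y, hy, hy_notMem⟩ :=
    (Icc_infinite (by norm_num : (-1 : ℝ) < 1)).exists_notMem_finset ((Finset.Ico 1 m).image z)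
  refine (prod_pos fun j hj => abs_pos.2 (sub_ne_zero.2 ?_)).trans_le ((hz.2 m hm).2 y hy)
  exact fun h => hy_notMem (mem_image.2 ⟨j, hj, h.symm⟩)

lemma one_le_mul_abs_arccos_sub (hz : IsLejaSeq z) {m p : ℕ} (hm : 2 ≤ m) (hp : 1 ≤ p)
    (hpm : p < m) :
    1 ≤ 6 * (m - 1 : ℕ) * |arccos (z m) - arccos (z p)| := by
  set M := ∏ j ∈ Ico 1 m, |z m - z j|
  have hbound : ∀ θ, |∏ j ∈ Ico 1 m, (cos θ - z j)| ≤ M := fun θ => by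
    rw [abs_prod]
    exact (hz.2 m hm).2 _ ⟨neg_one_le_cos θ, cos_le_one θ⟩
  have hmax : |∏ j ∈ Ico 1 m, (cos (arccos (z m)) - z j)| = M := by
    rw [cos_arccos (hz.mem_Icc (by omega)).1 (hz.mem_Icc (by omega)).2, abs_prod]
  have hzero : ∏ j ∈ Ico 1 m, (cos (arccos (z p)) - z j) = 0 := by
    rw [cos_arccos (hz.mem_Icc hp).1 (hz.mem_Icc hp).2]
    exact prod_eq_zero (mem_Ico.2 ⟨hp, hpm⟩) (sub_self _)
  have h := abs_prod_cos_sub_le (Ico 1 m) z hbound (arccos (z p)) (arccos (z m))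
  rw [hmax, hzero, abs_zero, zero_add, Nat.card_Ico] at h
  have hM := hz.prod_abs_sub_pos hm
  nlinarith

lemma inv_le_abs_arccos_sub (hz : IsLejaSeq z) {n j k : ℕ} (hj : 1 ≤ j) (hjn : j ≤ n)
    (hk : 1 ≤ k) (hkn : k ≤ n) (hjk : j ≠ k) : 1 / (6 * n) ≤ |arccos (z k) - arccos (z j)| := by
  have hsep : 1 ≤ 6 * (max j k - 1 : ℕ) * |arccos (z k) - arccos (z j)| := by
    rcases lt_or_gt_of_ne hjk with h | h
    · simpa [max_eq_right h.le] using hz.one_le_mul_abs_arccos_sub (by omega) hj h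
    · simpa [max_eq_left h.le, abs_sub_comm] using hz.one_le_mul_abs_arccos_sub (by omega) hk h
  have hn : ((max j k - 1 : ℕ) : ℝ) ≤ n := by exact_mod_cast (by omega : max j k - 1 ≤ n)
  have hn₀ : (0 : ℝ) < n := by exact_mod_cast (by omega : 0 < n)
  rw [div_le_iff₀ (by positivity)]
  nlinarith [abs_nonneg (arccos (z k) - arccos (z j))]

end IsLejaSeq

/-- With `u = sin (|b - a| / 2)` and `σ = sin ((a + b) / 2)` one has `|cos b - cos a| = 2σu`,
`σ ≥ u` and `2σ ≥ sin a + sin b ≥ sin b`. -/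
lemma sq_add_mul_sin_le_abs_cos_sub_cos {a b : ℝ} (ha : a ∈ Icc 0 π) (hb : b ∈ Icc 0 π) :
    sin (|b - a| / 2) ^ 2 + sin (|b - a| / 2) * sin b / 2 ≤ |cos b - cos a| := by
  have hsum : |b - a| ≤ a + b := abs_sub_le_iff.2 ⟨by linarith [ha.1], by linarith [hb.1]⟩
  have hsum' : a + b + |b - a| ≤ 2 * π := by
    rcases abs_cases (b - a) with ⟨h, -⟩ | ⟨h, -⟩ <;> linarith [ha.2, hb.2]
  have hσ : 0 ≤ sin ((a + b) / 2) :=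
    sin_nonneg_of_nonneg_of_le_pi (by linarith [ha.1, hb.1]) (by linarith [ha.2, hb.2])
  have hu : 0 ≤ sin (|b - a| / 2) :=
    sin_nonneg_of_nonneg_of_le_pi (by positivity) (by linarith [ha.2, hb.2])
  have hgap : |cos b - cos a| = 2 * sin ((a + b) / 2) * sin (|b - a| / 2) := by
    have hhalf : |(b - a) / 2| = |b - a| / 2 := by rw [abs_div, abs_two]
    rw [cos_sub_cos, add_comm b a, abs_mul, abs_mul, abs_of_nonneg hσ,
      abs_sin_eq_sin_abs_of_abs_le_pi (by rw [hhalf]; linarith [ha.2, hb.2]), hhalf]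
    norm_num
  have hu_le : sin (|b - a| / 2) ≤ sin ((a + b) / 2) := by
    have := sin_sub_sin ((a + b) / 2) (|b - a| / 2)
    nlinarith [cos_nonneg_of_mem_Icc (x := ((a + b) / 2 + |b - a| / 2) / 2)
      ⟨by linarith [ha.1, hb.1, abs_nonneg (b - a)], by linarith⟩,
      sin_nonneg_of_nonneg_of_le_pi (x := ((a + b) / 2 - |b - a| / 2) / 2) (by linarith)
        (by linarith [ha.2, hb.2, abs_nonneg (b - a)])]
  have hsin_le : sin b ≤ 2 * sin ((a + b) / 2) := by
    have := sin_add_sin a b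
    nlinarith [cos_le_one ((a - b) / 2), sin_nonneg_of_nonneg_of_le_pi ha.1 ha.2]
  rw [hgap]
  nlinarith

lemma mul_rho_cos_le_abs_cos_sub_cos {n : ℕ} (hn : 0 < n) {a b : ℝ} (ha : a ∈ Icc 0 π)
    (hb : b ∈ Icc 0 π) (hsep : 1 / (6 * n) ≤ |b - a|) :
    1 / (18 * π ^ 2) * rho n (cos b) ≤ |cos b - cos a| := by
  have hn₀ : (0 : ℝ) < n := by exact_mod_cast hn
  set u := sin (|b - a| / 2)
  have hu : 1 / (6 * π * n) ≤ u := by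
    have hδ : |b - a| ≤ π := abs_sub_le_iff.2 ⟨by linarith [hb.2, ha.1], by linarith [ha.2, hb.1]⟩
    calc 1 / (6 * π * n) = 1 / (6 * n) / π := by ring
      _ ≤ |b - a| / π := by gcongr
      _ = 2 / π * (|b - a| / 2) := by ring
      _ ≤ u := mul_le_sin (by positivity) (by linarith)
  have hcoef : 1 / (18 * π ^ 2 * n) ≤ 1 / (6 * π * n) / 2 := by
    rw [div_div, one_div_le_one_div (by positivity) (by positivity)]
    nlinarith [mul_pos (mul_pos pi_pos hn₀) (by linarith [pi_gt_three] : (0 : ℝ) < 3 * π - 2)]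
  have hsin : 0 ≤ sin b := sin_nonneg_of_nonneg_of_le_pi hb.1 hb.2
  calc 1 / (18 * π ^ 2) * rho n (cos b)
      ≤ 1 / (18 * π ^ 2) * ((1 / n) ^ 2 / 2 + 1 / n * sin b) := by
        gcongr
        simpa only [abs_of_nonneg hsin] using rho_cos_le n b
    _ = (1 / (6 * π * n)) ^ 2 + 1 / (18 * π ^ 2 * n) * sin b := by ring
    _ ≤ (1 / (6 * π * n)) ^ 2 + 1 / (6 * π * n) / 2 * sin b := by
        linarith [mul_le_mul_of_nonneg_right hcoef hsin]
    _ ≤ u ^ 2 + u / 2 * sin b := by gcongr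
    _ ≤ |cos b - cos a| := by linarith [sq_add_mul_sin_le_abs_cos_sub_cos ha hb]

/-- **Proposition.** Leja points on `[-1,1]` are well separated: there is a constant
`c > 0` such that for every Leja sequence, every `n ≥ 2` and all `1 ≤ j, k ≤ n` with
`j ≠ k`, one has `|z k - z j| ≥ c · ρ_{1/n}(z k)`. -/
theorem leja_points_well_separated :
    ∃ c : ℝ, 0 < c ∧ ∀ z : ℕ → ℝ, IsLejaSeq z →
      ∀ n : ℕ, 2 ≤ n → ∀ j k : ℕ, 1 ≤ j → j ≤ n → 1 ≤ k → k ≤ n → j ≠ k →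
        c * rho n (z k) ≤ |z k - z j| := by
  refine ⟨1 / (18 * π ^ 2), by positivity, fun z hz n hn j k hj hjn hk hkn hjk => ?_⟩
  have hzj := hz.mem_Icc hj
  have hzk := hz.mem_Icc hk
  have h := mul_rho_cos_le_abs_cos_sub_cos (by omega) ⟨arccos_nonneg (z j), arccos_le_pi _⟩
    ⟨arccos_nonneg (z k), arccos_le_pi _⟩ (hz.inv_le_abs_arccos_sub hj hjn hk hkn hjk)
  rwa [cos_arccos hzj.1 hzj.2, cos_arccos hzk.1 hzk.2] at h
end

section
/- There exists a constant c₂ ≥ 1 such that for every n ≥ 1 and every x ∈ [−1,1], (1/c₂) ρ_{1/n}(x) ≤ √(1−|x|)/n + 1/n² ≤ c₂ ρ_{1/n}(x), where ρ_{1/n}(x) is the distance (in ℂ) from x to the ellipse I_{1/n}. -/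
open Complex Metric

noncomputable def joukowski (w : ℂ) : ℂ := (w + w⁻¹) / 2

lemma joukowskiEllipse_eq_image (n : ℕ) :
    joukowskiEllipse n = joukowski '' sphere 0 (1 + 1 / (n : ℝ)) := by
  ext ζ
  simp [joukowskiEllipse, joukowski, eq_comm]

lemma joukowski_sub_joukowski {w v : ℂ} (hw : w ≠ 0) (hv : v ≠ 0) :
    joukowski w - joukowski v = (w - v) * (w - v⁻¹) / (2 * w) := by
  unfold joukowski
  field_simp
  ring

lemma exists_norm_eq_one_joukowski_eq {x : ℝ} (hx : |x| ≤ 1) :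
    ∃ v : ℂ, ‖v‖ = 1 ∧ joukowski v = x ∧ ‖v - v⁻¹‖ = 2 * √(1 - x ^ 2) := by
  have hx2 : 0 ≤ 1 - x ^ 2 := by nlinarith [sq_abs x, abs_nonneg x]
  set t := √(1 - x ^ 2)
  have hv : ‖(x + t * I : ℂ)‖ = 1 := by
    rw [norm_add_mul_I, Real.sq_sqrt hx2]
    simp
  have hinv : (x + t * I : ℂ)⁻¹ = x - t * I := by
    rw [inv_eq_conj hv]
    simp [Complex.ext_iff]
  refine ⟨x + t * I, hv, ?_, ?_⟩
  · rw [joukowski, hinv]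
    ring
  · rw [hinv, show (x + t * I - (x - t * I) : ℂ) = ((2 * t : ℝ) : ℂ) * I by push_cast; ring,
      norm_mul, norm_I, norm_real, Real.norm_of_nonneg (by positivity), mul_one]

lemma le_two_mul_norm_sub_mul_norm_sub {v w : ℂ} {ε : ℝ} (hv : ‖v‖ = 1) (hw : ‖w‖ = 1 + ε)
    (hε : 0 ≤ ε) : ε * ‖v - v⁻¹‖ / 2 + ε ^ 2 ≤ 2 * (‖w - v‖ * ‖w - v⁻¹‖) := by
  have hA : ε ≤ ‖w - v‖ := by linarith [norm_sub_norm_le w v]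
  have hB : ε ≤ ‖w - v⁻¹‖ := by
    linarith [norm_sub_norm_le w v⁻¹, show ‖v⁻¹‖ = 1 by rw [norm_inv, hv, inv_one]]
  have hAB : ‖v - v⁻¹‖ ≤ ‖w - v‖ + ‖w - v⁻¹‖ := by
    simpa only [norm_sub_rev v w] using norm_sub_le_norm_sub_add_norm_sub v w v⁻¹
  -- for the two norms `A, B`: `AB ≥ ε²` and `AB ≥ ε (A + B) - ε² ≥ ε ‖v - v⁻¹‖ - ε²`; add these
  nlinarith [mul_le_mul hA hB hε (hε.trans hA), mul_nonneg (sub_nonneg.2 hA) (sub_nonneg.2 hB)]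

lemma norm_joukowski_sub_ge {v w : ℂ} {ε : ℝ} (hv : ‖v‖ = 1) (hw : ‖w‖ = 1 + ε)
    (hε₀ : 0 ≤ ε) (hε₁ : ε ≤ 1) :
    (ε * ‖v - v⁻¹‖ / 2 + ε ^ 2) / 8 ≤ ‖joukowski w - joukowski v‖ := by
  have hw0 : w ≠ 0 := norm_pos_iff.1 (by linarith)
  have hv0 : v ≠ 0 := norm_pos_iff.1 (by linarith)
  have key := le_two_mul_norm_sub_mul_norm_sub hv hw hε₀
  rw [joukowski_sub_joukowski hw0 hv0, norm_div, norm_mul, norm_mul, Complex.norm_two, hw,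
    le_div_iff₀ (by positivity)]
  have hT : 0 ≤ ε * ‖v - v⁻¹‖ / 2 + ε ^ 2 := by positivity
  nlinarith [mul_le_mul_of_nonneg_left hε₁ hT]

lemma norm_joukowski_mul_sub_le {v : ℂ} {ε : ℝ} (hv : ‖v‖ = 1) (hε : 0 ≤ ε) :
    ‖joukowski ((1 + ε : ℝ) * v) - joukowski v‖ ≤ ε * (‖v - v⁻¹‖ + ε) / 2 := by
  have hv0 : v ≠ 0 := norm_pos_iff.1 (by linarith)
  have hr0 : ((1 + ε : ℝ) : ℂ) ≠ 0 := ofReal_ne_zero.2 (by linarith)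
  rw [joukowski_sub_joukowski (mul_ne_zero hr0 hv0) hv0,
    show ((1 + ε : ℝ) : ℂ) * v - v = ε * v by push_cast; ring,
    show ((1 + ε : ℝ) : ℂ) * v - v⁻¹ = (v - v⁻¹) + ε * v by push_cast; ring]
  have hsum : ‖v - v⁻¹ + ε * v‖ ≤ ‖v - v⁻¹‖ + ε := by
    simpa [hv, abs_of_nonneg hε] using norm_add_le (v - v⁻¹) (ε * v)
  rw [norm_div, norm_mul, norm_mul, norm_mul, norm_mul, Complex.norm_two, norm_real, norm_real,
    Real.norm_of_nonneg hε, Real.norm_of_nonneg (by linarith), hv, div_le_div_iff₀ (by positivity)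
    (by norm_num)]
  have hd : 0 ≤ ε * (‖v - v⁻¹‖ + ε) := by positivity
  nlinarith [mul_nonneg hd hε, mul_le_mul_of_nonneg_left hsum hε]

lemma sqrt_one_sub_abs_le_sqrt_one_sub_sq {x : ℝ} (hx : |x| ≤ 1) : √(1 - |x|) ≤ √(1 - x ^ 2) :=
  Real.sqrt_le_sqrt (by nlinarith [sq_abs x, abs_nonneg x])

lemma sqrt_one_sub_sq_le_two_mul_sqrt_one_sub_abs {x : ℝ} (hx : |x| ≤ 1) :
    √(1 - x ^ 2) ≤ 2 * √(1 - |x|) := by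
  rw [Real.sqrt_le_iff, mul_pow, Real.sq_sqrt (by linarith)]
  exact ⟨by positivity, by nlinarith [sq_abs x, abs_nonneg x]⟩

lemma le_infDist_joukowski_sphere {ε x : ℝ} (hε₀ : 0 ≤ ε) (hε₁ : ε ≤ 1) (hx : |x| ≤ 1) :
    (ε * √(1 - |x|) + ε ^ 2) / 8 ≤ infDist (x : ℂ) (joukowski '' sphere 0 (1 + ε)) := by
  obtain ⟨v, hv, hvx, hvv⟩ := exists_norm_eq_one_joukowski_eq hx
  have hne : (sphere (0 : ℂ) (1 + ε)).Nonempty := NormedSpace.sphere_nonempty.2 (by linarith)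
  rw [le_infDist (hne.image _)]
  rintro _ ⟨w, hw, rfl⟩
  rw [mem_sphere_zero_iff_norm] at hw
  calc (ε * √(1 - |x|) + ε ^ 2) / 8
      ≤ (ε * ‖v - v⁻¹‖ / 2 + ε ^ 2) / 8 := by
        rw [hvv]
        linarith [mul_le_mul_of_nonneg_left (sqrt_one_sub_abs_le_sqrt_one_sub_sq hx) hε₀]
    _ ≤ ‖joukowski w - joukowski v‖ := norm_joukowski_sub_ge hv hw hε₀ hε₁
    _ = dist (x : ℂ) (joukowski w) := by rw [dist_comm, dist_eq_norm, hvx]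

lemma infDist_joukowski_sphere_le {ε x : ℝ} (hε : 0 ≤ ε) (hx : |x| ≤ 1) :
    infDist (x : ℂ) (joukowski '' sphere 0 (1 + ε)) ≤ 2 * (ε * √(1 - |x|) + ε ^ 2) := by
  obtain ⟨v, hv, hvx, hvv⟩ := exists_norm_eq_one_joukowski_eq hx
  have hmem : joukowski ((1 + ε : ℝ) * v) ∈ joukowski '' sphere 0 (1 + ε) := by
    refine ⟨_, ?_, rfl⟩
    rw [mem_sphere_zero_iff_norm, norm_mul, norm_real, hv, mul_one,
      Real.norm_of_nonneg (by linarith)]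
  calc infDist (x : ℂ) (joukowski '' sphere 0 (1 + ε))
      ≤ ‖joukowski ((1 + ε : ℝ) * v) - joukowski v‖ := by
        rw [← hvx, ← dist_eq_norm, dist_comm]
        exact infDist_le_dist_of_mem hmem
    _ ≤ ε * (‖v - v⁻¹‖ + ε) / 2 := norm_joukowski_mul_sub_le hv hε
    _ ≤ 2 * (ε * √(1 - |x|) + ε ^ 2) := by
        rw [hvv]
        nlinarith [mul_le_mul_of_nonneg_left (sqrt_one_sub_sq_le_two_mul_sqrt_one_sub_abs hx) hε]

/-- There is a constant `c₂ ≥ 1` such that for all `n ≥ 1` and `x ∈ [-1,1]`,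
`(1/c₂) ρ_{1/n}(x) ≤ √(1-|x|)/n + 1/n² ≤ c₂ ρ_{1/n}(x)`. -/
theorem rho_comparable_to_sqrt_dist :
    ∃ c₂ : ℝ, 1 ≤ c₂ ∧ ∀ n : ℕ, 1 ≤ n → ∀ x ∈ Set.Icc (-1 : ℝ) 1,
      (1 / c₂) * rho n x ≤ Real.sqrt (1 - |x|) / n + 1 / (n : ℝ) ^ 2 ∧
      Real.sqrt (1 - |x|) / n + 1 / (n : ℝ) ^ 2 ≤ c₂ * rho n x := by
  refine ⟨8, by norm_num, fun n hn x hx => ?_⟩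
  have hε₀ : (0 : ℝ) ≤ 1 / n := by positivity
  have hε₁ : 1 / (n : ℝ) ≤ 1 := div_le_one_of_le₀ (by exact_mod_cast hn) (by positivity)
  have hx' : |x| ≤ 1 := abs_le.2 hx
  have hT : √(1 - |x|) / n + 1 / (n : ℝ) ^ 2 = 1 / n * √(1 - |x|) + (1 / n) ^ 2 := by ring
  have hT₀ : 0 ≤ 1 / (n : ℝ) * √(1 - |x|) + (1 / n) ^ 2 := by positivity
  rw [hT, rho, joukowskiEllipse_eq_image]
  constructor
  · linarith [infDist_joukowski_sphere_le hε₀ hx']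
  · linarith [le_infDist_joukowski_sphere hε₀ hε₁ hx']
end

section
/- For every constant c₁ > 0 there exists a constant c > 0 such that for every n ≥ 1 and all x, y ∈ [−1,1] satisfying |x − y| ≥ c₁( √(1−|x|)/n + √(1−|y|)/n + 1/n² ), one has |arccos x − arccos y| ≥ c/n. (Equivalently, the arcsine measure of the subinterval of [−1,1] between x and y is at least c/(πn).) -/
/-!
Write `θ = arccos x`, `φ = arccos y` and `t = |θ - φ|`. Expanding `cos φ = cos (θ + (φ - θ))`
gives `|x - y| ≤ t (sin θ + t / 2)`, and `sin θ = √(1 - x²) ≤ √2 √(1 - |x|)`. Hence if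
`t < c / n` then `|x - y| < (c / n) (√2 √(1 - |x|) + c / (2n))`, which for `c = min c₁ 1 / 2`
is at most `c₁ (√(1 - |x|) / n + 1 / n²)`, contradicting the distancing hypothesis.
-/

open Real Set

theorem Real.abs_cos_sub_cos_le_mul (a b : ℝ) :
    |cos a - cos b| ≤ |a - b| * (|sin a| + |a - b| / 2) := by
  set h := b - a
  have hab : |h| = |a - b| := abs_sub_comm b a
  have hcos : cos a - cos b = cos a * (1 - cos h) + sin a * sin h := by
    have := cos_add a h
    rw [add_sub_cancel] at this
    rw [this]; ring
  have hvers : |cos a * (1 - cos h)| ≤ |a - b| ^ 2 / 2 := by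
    rw [abs_mul, abs_of_nonneg (sub_nonneg.2 (cos_le_one h)), ← hab, sq_abs]
    nlinarith [abs_cos_le_one a, one_sub_sq_div_two_le_cos (x := h), cos_le_one h]
  have hsin : |sin a * sin h| ≤ |sin a| * |a - b| := by
    rw [abs_mul, ← hab]
    exact mul_le_mul_of_nonneg_left abs_sin_le_abs (abs_nonneg _)
  calc |cos a - cos b| ≤ |cos a * (1 - cos h)| + |sin a * sin h| := hcos ▸ abs_add_le _ _
    _ ≤ |a - b| * (|sin a| + |a - b| / 2) := by linarith

theorem Real.sqrt_one_sub_sq_le (x : ℝ) : √(1 - x ^ 2) ≤ √2 * √(1 - |x|) := by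
  rw [← sqrt_mul zero_le_two]
  apply sqrt_le_sqrt
  nlinarith [sq_abs x, sq_nonneg (1 - |x|)]

theorem abs_sub_le_abs_arccos_sub_mul {x y : ℝ} (hx : x ∈ Icc (-1 : ℝ) 1)
    (hy : y ∈ Icc (-1 : ℝ) 1) :
    |x - y| ≤ |arccos x - arccos y| * (√2 * √(1 - |x|) + |arccos x - arccos y| / 2) := by
  have h := abs_cos_sub_cos_le_mul (arccos x) (arccos y)
  rw [cos_arccos hx.1 hx.2, cos_arccos hy.1 hy.2, sin_arccos,
    abs_of_nonneg (sqrt_nonneg _)] at h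
  refine h.trans (mul_le_mul_of_nonneg_left ?_ (abs_nonneg _))
  linarith [sqrt_one_sub_sq_le x]

theorem abs_sub_lt_of_abs_arccos_sub_lt {x y δ : ℝ} (hx : x ∈ Icc (-1 : ℝ) 1)
    (hy : y ∈ Icc (-1 : ℝ) 1) (h : |arccos x - arccos y| < δ) :
    |x - y| < δ * (√2 * √(1 - |x|) + δ / 2) := by
  have hδ : 0 < δ := (abs_nonneg _).trans_lt h
  calc |x - y| ≤ |arccos x - arccos y| * (√2 * √(1 - |x|) + |arccos x - arccos y| / 2) :=
        abs_sub_le_abs_arccos_sub_mul hx hy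
    _ ≤ |arccos x - arccos y| * (√2 * √(1 - |x|) + δ / 2) := by gcongr
    _ < δ * (√2 * √(1 - |x|) + δ / 2) := by gcongr

/-- **(Lemma 3.2 specialized to `[-1,1]`.)** For every `c₁ > 0` there is a `c > 0` such
that for all `n ≥ 1` and `x, y ∈ [-1,1]` satisfying the distancing rule
`|x - y| ≥ c₁(√(1-|x|)/n + √(1-|y|)/n + 1/n²)`, one has
`|arccos x - arccos y| ≥ c/n` (i.e. the arcsine measure of the arc between `x` and `y`
is at least `c/(πn)`). -/
theorem arccos_gap_of_distancing (c₁ : ℝ) (hc₁ : 0 < c₁) :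
    ∃ c : ℝ, 0 < c ∧ ∀ n : ℕ, 1 ≤ n →
      ∀ x ∈ Set.Icc (-1 : ℝ) 1, ∀ y ∈ Set.Icc (-1 : ℝ) 1,
        c₁ * (Real.sqrt (1 - |x|) / n + Real.sqrt (1 - |y|) / n + 1 / (n : ℝ) ^ 2)
            ≤ |x - y| →
          c / n ≤ |Real.arccos x - Real.arccos y| := by
  set m := min c₁ 1
  have hm : 0 < m := lt_min hc₁ one_pos
  refine ⟨m / 2, half_pos hm, fun n hn x hx y hy hdist => ?_⟩
  by_contra! ht
  have hn : (0 : ℝ) < n := by exact_mod_cast hn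
  set s := √(1 - |x|)
  have hexpand : m / 2 / n * (√2 * s + m / 2 / n / 2)
      = m * √2 / 2 * (s / n) + m ^ 2 / 8 * (1 / (n : ℝ) ^ 2) := by
    field_simp; ring
  have hsqrt2 : √2 ≤ 2 := by rw [sqrt_le_left zero_le_two]; norm_num
  have hcoef₁ : m * √2 / 2 ≤ c₁ := by nlinarith [min_le_left c₁ 1]
  have hcoef₂ : m ^ 2 / 8 ≤ c₁ := by nlinarith [min_le_left c₁ 1, min_le_right c₁ 1]
  have := abs_sub_lt_of_abs_arccos_sub_lt hx hy ht
  rw [hexpand] at this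
  nlinarith [show 0 ≤ s / n by positivity, show 0 ≤ √(1 - |y|) / n by positivity,
    show 0 ≤ 1 / (n : ℝ) ^ 2 by positivity]
end

section
/- For every constant c > 0 there exists a constant C > 0 such that the following holds: if n ≥ 1 and x₁, …, x_n ∈ [−1,1] satisfy |arccos x_j − arccos x_k| ≥ c/n for all j ≠ k, then for every k with 1 ≤ k ≤ n and every δ ∈ (0,1], the number of indices j ≠ k with |x_j − x_k| ≤ δ is at most C(δ^{1/2} n + 1). -/
/-!
Since `|cos a - cos b| ≥ 2 (a - b)² / π²` on `[0, π]`, every `x_j` with `|x_j - x_k| ≤ δ` has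
`arccos x_j` within `π √δ` of `arccos x_k`. These angles are `c / n`-separated, so an interval
of length `2 π √δ` holds at most `2 π √δ n / c + 1` of them.
-/

open Real Set
open scoped Finset

theorem Finset.card_le_div_add_one_of_separated {ι : Type*} {S : Finset ι} {θ : ι → ℝ}
    {ε a b : ℝ} (hε : 0 < ε) (hab : a ≤ b) (hmem : ∀ j ∈ S, θ j ∈ Set.Icc a b)
    (hsep : ∀ j ∈ S, ∀ k ∈ S, j ≠ k → ε ≤ |θ j - θ k|) :
    (#S : ℝ) ≤ (b - a) / ε + 1 := by
  -- Points in the same cell `[a + i ε, a + (i + 1) ε)` would be closer than `ε`.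
  set cell : ι → ℕ := fun j => ⌊(θ j - a) / ε⌋₊
  have hmaps : ∀ j ∈ S, cell j ∈ Finset.range (⌊(b - a) / ε⌋₊ + 1) := fun j hj => by
    rw [Finset.mem_range, Nat.lt_succ_iff]
    exact Nat.floor_le_floor (by gcongr; exact (hmem j hj).2)
  have hinj : Set.InjOn cell S := by
    intro j hj k hk hcell
    by_contra hne
    have hfloor : ⌊(θ j - a) / ε⌋ = ⌊(θ k - a) / ε⌋ := by
      rw [← Int.natCast_floor_eq_floor (div_nonneg (sub_nonneg.2 (hmem j hj).1) hε.le),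
        ← Int.natCast_floor_eq_floor (div_nonneg (sub_nonneg.2 (hmem k hk).1) hε.le)]
      exact congrArg Nat.cast hcell
    have hlt := Int.abs_sub_lt_one_of_floor_eq_floor hfloor
    rw [div_sub_div_same, sub_sub_sub_cancel_right, abs_div, abs_of_pos hε, div_lt_one hε] at hlt
    exact (hsep j hj k hk hne).not_gt hlt
  calc (#S : ℝ) ≤ ⌊(b - a) / ε⌋₊ + 1 := by
        exact_mod_cast (Finset.card_le_card_of_injOn cell hmaps hinj).trans (Finset.card_range _).le
    _ ≤ (b - a) / ε + 1 := by
        gcongr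
        exact Nat.floor_le (div_nonneg (sub_nonneg.2 hab) hε.le)

theorem Real.sq_sub_le_mul_abs_cos_sub_cos {a b : ℝ} (ha : a ∈ Icc 0 π) (hb : b ∈ Icc 0 π) :
    (a - b) ^ 2 ≤ π ^ 2 / 2 * |cos a - cos b| := by
  wlog hba : b ≤ a generalizing a b
  · rw [← neg_sub, neg_sq, abs_sub_comm]
    exact this hb ha (le_of_not_ge hba)
  obtain ⟨ha0, haπ⟩ := ha
  obtain ⟨hb0, hbπ⟩ := hb
  set d := (a - b) / 2
  set s := (a + b) / 2
  have hsin_d : 2 / π * d ≤ sin d := mul_le_sin (by positivity) (by simp only [d]; linarith)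
  -- `sin s - sin d = 2 sin (b / 2) cos (a / 2)` with `a / 2, b / 2 ∈ [0, π / 2]`.
  have hsin_s : sin d ≤ sin s := by
    have hdiff : sin s - sin d = 2 * sin (b / 2) * cos (a / 2) := by
      simp only [d, s]; rw [sin_sub_sin]; ring_nf
    have := sin_nonneg_of_nonneg_of_le_pi (x := b / 2) (by linarith) (by linarith)
    have := cos_nonneg_of_mem_Icc (x := a / 2) ⟨by linarith, by linarith⟩
    nlinarith
  have hcos : |cos a - cos b| = 2 * sin s * sin d := by
    rw [abs_sub_comm, abs_of_nonneg (sub_nonneg.2 (cos_le_cos_of_nonneg_of_le_pi hb0 haπ hba)),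
      cos_sub_cos, show (b - a) / 2 = -d by ring, add_comm b a, sin_neg]
    ring
  have hsq : (2 / π * d) ^ 2 ≤ sin s * sin d := by
    calc (2 / π * d) ^ 2 ≤ sin d * sin d := by rw [← sq]; gcongr
      _ ≤ sin s * sin d := by gcongr; exact hsin_d.trans' (by positivity)
  rw [hcos]
  have hπ := pi_pos
  calc (a - b) ^ 2 = π ^ 2 * (2 / π * d) ^ 2 := by field_simp; ring
    _ ≤ π ^ 2 * (sin s * sin d) := by gcongr
    _ = π ^ 2 / 2 * (2 * sin s * sin d) := by ring

theorem Real.abs_arccos_sub_arccos_le {x y : ℝ} (hx : x ∈ Icc (-1) 1) (hy : y ∈ Icc (-1) 1) :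
    |arccos x - arccos y| ≤ π * √|x - y| := by
  have h := sq_sub_le_mul_abs_cos_sub_cos ⟨arccos_nonneg x, arccos_le_pi x⟩
    ⟨arccos_nonneg y, arccos_le_pi y⟩
  rw [cos_arccos hx.1 hx.2, cos_arccos hy.1 hy.2] at h
  calc |arccos x - arccos y| ≤ √(π ^ 2 * |x - y|) :=
        abs_le_sqrt (h.trans (by have := abs_nonneg (x - y); nlinarith [sq_nonneg π]))
    _ = π * √|x - y| := by rw [sqrt_mul (sq_nonneg π), sqrt_sq pi_pos.le]

/-- If `x₁, …, x_n ∈ [-1,1]` satisfy `|arccos x_j - arccos x_k| ≥ c/n` for all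
`j ≠ k`, then for each `k` and each `δ ∈ (0,1]`, the number of indices `j ≠ k` with
`|x_j - x_k| ≤ δ` is at most `C(δ^{1/2} n + 1)`, where `C` depends only on `c`. -/
theorem card_close_points_le (c : ℝ) (hc : 0 < c) :
    ∃ C : ℝ, 0 < C ∧ ∀ n : ℕ, 1 ≤ n → ∀ x : ℕ → ℝ,
      (∀ j, 1 ≤ j → j ≤ n → x j ∈ Set.Icc (-1 : ℝ) 1) →
      (∀ j k, 1 ≤ j → j ≤ n → 1 ≤ k → k ≤ n → j ≠ k →
        c / n ≤ |Real.arccos (x j) - Real.arccos (x k)|) →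
      ∀ k, 1 ≤ k → k ≤ n → ∀ δ : ℝ, δ ∈ Set.Ioc (0 : ℝ) 1 →
        (((Finset.Icc 1 n).filter (fun j => j ≠ k ∧ |x j - x k| ≤ δ)).card : ℝ)
          ≤ C * (δ ^ ((1 : ℝ) / 2) * n + 1) := by
  refine ⟨2 * π / c + 1, by positivity, ?_⟩
  rintro n hn x hx hsep k hk₁ hk₂ δ ⟨hδ, -⟩
  rw [← sqrt_eq_rpow]
  set S := (Finset.Icc 1 n).filter (fun j => j ≠ k ∧ |x j - x k| ≤ δ)
  have hnear : ∀ j ∈ S, arccos (x j) ∈ Icc (arccos (x k) - π * √δ) (arccos (x k) + π * √δ) := by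
    intro j hj
    obtain ⟨hj, -, hjδ⟩ := Finset.mem_filter.1 hj
    rw [Finset.mem_Icc] at hj
    rw [← mem_Icc_iff_abs_le, abs_sub_comm]
    exact (abs_arccos_sub_arccos_le (hx j hj.1 hj.2) (hx k hk₁ hk₂)).trans (by gcongr)
  have hsepS : ∀ j ∈ S, ∀ i ∈ S, j ≠ i → c / n ≤ |arccos (x j) - arccos (x i)| := by
    intro j hj i hi hne
    obtain ⟨hj, -⟩ := Finset.mem_filter.1 hj
    obtain ⟨hi, -⟩ := Finset.mem_filter.1 hi
    rw [Finset.mem_Icc] at hj hi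
    exact hsep j i hj.1 hj.2 hi.1 hi.2 hne
  have hn₀ : (0 : ℝ) < n := by exact_mod_cast hn
  have hcard := Finset.card_le_div_add_one_of_separated (by positivity)
    (by have := sqrt_nonneg δ; nlinarith [pi_pos]) hnear hsepS
  have hsqrt : 0 ≤ √δ * n := by positivity
  calc (#S : ℝ) ≤ 2 * π / c * (√δ * n) + 1 := by
        convert hcard using 2; field_simp; ring
    _ ≤ (2 * π / c + 1) * (√δ * n + 1) := by nlinarith [pi_pos, div_pos two_pi_pos hc]
end

section
/- Let c > 0 and let {x_{n,k}}_{1≤k≤n, n≥1} be a triangular array of points of [−1,1] such that for every n and all 1 ≤ j, k ≤ n with j ≠ k one has |arccos x_{n,j} − arccos x_{n,k}| ≥ c/n. For δ ∈ (0,1] and 1 ≤ k ≤ n set S_{n,k,δ} := Π_{j ≠ k, |x_{n,j} − x_{n,k}| ≤ δ} |x_{n,j} − x_{n,k}| (an empty product equals 1). Then there exist constants c_δ > 0, defined for all sufficiently small δ > 0, with lim_{δ→0⁺} c_δ = 0, such that for each such δ, liminf_{n→∞} min_{1≤k≤n} S_{n,k,δ}^{1/n} ≥ e^{−c_δ}.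 -/
open Filter

/-- `S_{n,k,δ} = ∏_{j ≠ k, |x_{n,j} - x_{n,k}| ≤ δ} |x_{n,j} - x_{n,k}|`
(row `n` consists of `x n 0, …, x n (n-1)`; an empty product equals `1`). -/
noncomputable def closeProd (x : ℕ → ℕ → ℝ) (n k : ℕ) (δ : ℝ) : ℝ :=
  ∏ j ∈ ((Finset.range n).erase k).filter (fun j => |x n j - x n k| ≤ δ),
    |x n j - x n k|

/-!
Write `θ_j = arccos x_{n,j}`. Since `|cos α - cos β| ≥ (2/π²)(α - β)²` on `[0, π]`, every index
`j` counted in `S_{n,k,δ}` has `|θ_j - θ_k| ≤ π√(δ/2)`, while the `θ_j - θ_k` are `c/n`-separated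
and at distance `≥ c/n` from `0`. Hence there are at most `m ≤ ρ n` such indices, `ρ = π√(2δ)/c`,
and their product satisfies `∏ |θ_j - θ_k| ≥ m! (c/2n)^m`. With `m! ≥ (m/e)^m` this gives
`S_{n,k,δ} ≥ (K t²)^(t n)` for `t = m/n ≤ ρ` and `K = c²/(2π²e²)`, and `t log t ≥ -2√t` turns
this into `S_{n,k,δ}^(1/n) ≥ exp (-(ρ |log K| + 4√ρ))`, uniformly in `n` and `k`.
-/

open Real Finset
open scoped Nat

lemma two_div_pi_sq_mul_sq_le_abs_cos_sub_cos {α β : ℝ} (hα : α ∈ Set.Icc 0 π)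
    (hβ : β ∈ Set.Icc 0 π) : 2 / π ^ 2 * (α - β) ^ 2 ≤ |cos α - cos β| := by
  obtain ⟨hα0, hαπ⟩ := hα
  obtain ⟨hβ0, hβπ⟩ := hβ
  set s := (α + β) / 2 with hs_def
  set d := (α - β) / 2 with hd_def
  have hd_le : |d| ≤ s ∧ |d| ≤ π - s := by
    simp only [abs_le]; refine ⟨⟨?_, ?_⟩, ?_, ?_⟩ <;> linarith
  have hsin_s : 2 / π * |d| ≤ sin s := by
    rcases le_total s (π / 2) with hs | hs
    · calc 2 / π * |d| ≤ 2 / π * s := by gcongr; exact hd_le.1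
        _ ≤ sin s := mul_le_sin (by linarith) hs
    · calc 2 / π * |d| ≤ 2 / π * (π - s) := by gcongr; exact hd_le.2
        _ ≤ sin (π - s) := mul_le_sin (by linarith) (by linarith)
        _ = sin s := sin_pi_sub s
  have hsin_d : 2 / π * |d| ≤ |sin d| := mul_abs_le_abs_sin (by linarith [hd_le.1, hd_le.2])
  have hsin_s_nonneg : 0 ≤ sin s := sin_nonneg_of_nonneg_of_le_pi (by linarith) (by linarith)
  have hsq : (α - β) ^ 2 = 4 * |d| ^ 2 := by rw [sq_abs, hd_def]; ring
  calc 2 / π ^ 2 * (α - β) ^ 2 = 2 * (2 / π * |d|) * (2 / π * |d|) := by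
        rw [hsq]; field_simp; ring
    _ ≤ 2 * sin s * |sin d| := by gcongr
    _ = |cos α - cos β| := by
        rw [cos_sub_cos, ← hs_def, ← hd_def, abs_mul, abs_mul, abs_of_nonneg hsin_s_nonneg]
        norm_num

lemma two_div_pi_sq_mul_sq_arccos_sub_le_abs_sub {a b : ℝ} (ha : a ∈ Set.Icc (-1) 1)
    (hb : b ∈ Set.Icc (-1) 1) : 2 / π ^ 2 * (arccos a - arccos b) ^ 2 ≤ |a - b| := by
  simpa only [cos_arccos ha.1 ha.2, cos_arccos hb.1 hb.2] using
    two_div_pi_sq_mul_sq_le_abs_cos_sub_cos ⟨arccos_nonneg a, arccos_le_pi a⟩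
      ⟨arccos_nonneg b, arccos_le_pi b⟩

lemma div_exp_one_pow_le_factorial (m : ℕ) : ((m : ℝ) / exp 1) ^ m ≤ m ! := by
  have := pow_div_factorial_le_exp _ (Nat.cast_nonneg m) m
  rw [← exp_one_pow, div_le_iff₀ (by positivity)] at this
  rw [div_pow, div_le_iff₀ (by positivity)]
  linarith [mul_comm (m ! : ℝ) (exp 1 ^ m)]

lemma neg_two_mul_sqrt_le_mul_log {t : ℝ} (ht : 0 ≤ t) : -(2 * √t) ≤ t * log t := by
  rcases ht.eq_or_lt with rfl | ht
  · simp
  have hu : 0 < √t := sqrt_pos.2 ht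
  have hlog := one_sub_inv_le_log_of_pos hu
  rw [log_sqrt ht.le] at hlog
  have : t * (1 - (√t)⁻¹) = t - √t := by
    field_simp
    nlinarith [sq_sqrt ht.le]
  nlinarith

section Separated

variable {ι : Type*} {s : Finset ι} {a : ι → ℝ} {ε R : ℝ}

lemma card_le_div_of_separated (hε : 0 < ε) (hR : 0 ≤ R) (hmem : ∀ i ∈ s, a i ∈ Set.Icc ε R)
    (hsep : ∀ i ∈ s, ∀ j ∈ s, i ≠ j → ε ≤ |a i - a j|) : (#s : ℝ) ≤ R / ε := by
  have hmaps : Set.MapsTo (fun i => ⌊a i / ε⌋₊) s (Icc 1 ⌊R / ε⌋₊) := fun i hi => by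
    have := hmem i hi
    simp only [coe_Icc, Set.mem_Icc, Nat.one_le_floor_iff, one_le_div hε]
    exact ⟨this.1, Nat.floor_le_floor (div_le_div_of_nonneg_right this.2 hε.le)⟩
  have hinj : Set.InjOn (fun i => ⌊a i / ε⌋₊) s := fun i hi j hj hij => by
    by_contra hne
    have hlt (u v : ℝ) (huv : ⌊u⌋₊ = ⌊v⌋₊) (hv : 0 ≤ v) : u < v + 1 :=
      (Nat.lt_floor_add_one u).trans_le (by rw [huv]; linarith [Nat.floor_le hv])
    have h1 := hlt _ _ hij (div_nonneg (hε.le.trans (hmem j hj).1) hε.le)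
    have h2 := hlt _ _ hij.symm (div_nonneg (hε.le.trans (hmem i hi).1) hε.le)
    rw [div_add_one hε.ne', div_lt_div_iff_of_pos_right hε] at h1 h2
    rcases le_abs'.1 (hsep i hi j hj hne) with h | h <;> linarith
  calc (#s : ℝ) ≤ ⌊R / ε⌋₊ := by
        exact_mod_cast (card_le_card_of_injOn _ hmaps hinj).trans (by simp)
    _ ≤ R / ε := Nat.floor_le (div_nonneg hR hε.le)

lemma card_le_two_mul_div_of_separated (hε : 0 < ε) (hR : 0 ≤ R)
    (hlow : ∀ i ∈ s, ε ≤ |a i|) (hup : ∀ i ∈ s, |a i| ≤ R)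
    (hsep : ∀ i ∈ s, ∀ j ∈ s, i ≠ j → ε ≤ |a i - a j|) : (#s : ℝ) ≤ 2 * R / ε := by
  classical
  have hpos : (#(s.filter (0 < a ·)) : ℝ) ≤ R / ε := by
    refine card_le_div_of_separated (a := a) hε hR (fun i hi => ?_) (fun i hi j hj => ?_)
    · obtain ⟨hi, hai⟩ := mem_filter.1 hi
      rw [← abs_of_pos hai]
      exact ⟨hlow i hi, hup i hi⟩
    · exact hsep i (mem_filter.1 hi).1 j (mem_filter.1 hj).1
  have hneg : (#(s.filter (¬ 0 < a ·)) : ℝ) ≤ R / ε := by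
    refine card_le_div_of_separated (a := (- a ·)) hε hR (fun i hi => ?_) (fun i hi j hj hij => ?_)
    · obtain ⟨hi, hai⟩ := mem_filter.1 hi
      rw [← abs_of_nonpos (not_lt.1 hai)]
      exact ⟨hlow i hi, hup i hi⟩
    · rw [neg_sub_neg, abs_sub_comm]
      exact hsep i (mem_filter.1 hi).1 j (mem_filter.1 hj).1 hij
  rw [← card_filter_add_card_filter_not (0 < a ·)]
  push_cast
  linarith [mul_div_assoc 2 R ε]

lemma factorial_mul_pow_le_prod_abs_of_separated (hε : 0 < ε) (hlow : ∀ i ∈ s, ε ≤ |a i|)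
    (hsep : ∀ i ∈ s, ∀ j ∈ s, i ≠ j → ε ≤ |a i - a j|) :
    ((#s)! : ℝ) * (ε / 2) ^ #s ≤ ∏ i ∈ s, |a i| := by
  classical
  induction s using Finset.induction_on_max_value (fun i => |a i|) with
  | empty => simp
  | insert i s hi hmax ih =>
    have hcard := card_le_two_mul_div_of_separated hε (abs_nonneg (a i)) hlow
      (fun j hj => (mem_insert.1 hj).elim (fun h => h ▸ le_rfl) (hmax j)) hsep
    rw [card_insert_of_notMem hi] at hcard ⊢
    rw [prod_insert hi]
    have ih' := ih (fun j hj => hlow j (mem_insert_of_mem hj))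
      (fun j hj j' hj' => hsep j (mem_insert_of_mem hj) j' (mem_insert_of_mem hj'))
    calc (((#s + 1)! : ℕ) : ℝ) * (ε / 2) ^ (#s + 1)
        = ((#s + 1 : ℕ) * (ε / 2)) * ((#s)! * (ε / 2) ^ #s) := by
          push_cast [Nat.factorial_succ]; ring
      _ ≤ |a i| * ∏ j ∈ s, |a j| := by
          gcongr
          rw [le_div_iff₀ hε] at hcard
          linarith

end Separated

lemma exp_neg_le_mul_sq_rpow_self {K t ρ : ℝ} (hK : 0 < K) (ht : 0 ≤ t) (htρ : t ≤ ρ) :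
    exp (-(ρ * |log K| + 4 * √ρ)) ≤ (K * t ^ 2) ^ t := by
  rcases ht.eq_or_lt with rfl | ht
  · rw [rpow_zero, exp_le_one_iff, neg_nonpos]
    positivity
  rw [rpow_def_of_pos (by positivity), exp_le_exp, log_mul hK.ne' (by positivity), log_pow]
  have hlogK : -(ρ * |log K|) ≤ t * log K := by
    nlinarith [neg_abs_le (log K), abs_nonneg (log K)]
  have hlogt : -(2 * √ρ) ≤ t * log t :=
    (neg_le_neg (by gcongr)).trans (neg_two_mul_sqrt_le_mul_log ht.le)
  push_cast
  linarith

def ArccosSeparated (c : ℝ) (x : ℕ → ℕ → ℝ) : Prop :=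
  ∀ n : ℕ, 1 ≤ n → ∀ j < n, ∀ k < n, j ≠ k → c / n ≤ |arccos (x n j) - arccos (x n k)|

noncomputable def closeIndices (x : ℕ → ℕ → ℝ) (n k : ℕ) (δ : ℝ) : Finset ℕ :=
  ((range n).erase k).filter (fun j => |x n j - x n k| ≤ δ)

noncomputable def closeFraction (c δ : ℝ) : ℝ := 2 * √(π ^ 2 * δ / 2) / c

noncomputable def closeExponent (c δ : ℝ) : ℝ :=
  closeFraction c δ * |log (c ^ 2 / (2 * π ^ 2 * exp 1 ^ 2))| + 4 * √(closeFraction c δ)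

section Row

variable {c : ℝ} {x : ℕ → ℕ → ℝ} {n k : ℕ} {δ : ℝ}

lemma mem_closeIndices {j : ℕ} :
    j ∈ closeIndices x n k δ ↔ j ≠ k ∧ j < n ∧ |x n j - x n k| ≤ δ := by
  simp [closeIndices, and_assoc]

lemma closeProd_nonneg : 0 ≤ closeProd x n k δ :=
  prod_nonneg fun _ _ => abs_nonneg _

lemma closeProd_le_one (hδ : δ ≤ 1) : closeProd x n k δ ≤ 1 :=
  prod_le_one (fun _ _ => abs_nonneg _) fun _ hj => (mem_filter.1 hj).2.trans hδ

lemma arccos_sub_separated_on_closeIndices (hsep : ArccosSeparated c x) (hn : 1 ≤ n)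
    (hk : k < n) :
    (∀ j ∈ closeIndices x n k δ, c / n ≤ |arccos (x n j) - arccos (x n k)|) ∧
    ∀ i ∈ closeIndices x n k δ, ∀ j ∈ closeIndices x n k δ, i ≠ j →
      c / n ≤ |(arccos (x n i) - arccos (x n k)) - (arccos (x n j) - arccos (x n k))| := by
  refine ⟨fun j hj => ?_, fun i hi j hj hij => ?_⟩
  · obtain ⟨hjk, hj, -⟩ := mem_closeIndices.1 hj
    exact hsep n hn j hj k hk hjk
  · rw [sub_sub_sub_cancel_right]
    exact hsep n hn i (mem_closeIndices.1 hi).2.1 j (mem_closeIndices.1 hj).2.1 hij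

lemma card_closeIndices_le (hc : 0 < c) (hmem : ∀ n, ∀ k < n, x n k ∈ Set.Icc (-1 : ℝ) 1)
    (hsep : ArccosSeparated c x) (hn : 1 ≤ n) (hk : k < n) :
    (#(closeIndices x n k δ) : ℝ) ≤ closeFraction c δ * n := by
  obtain ⟨hlow, hsep'⟩ := arccos_sub_separated_on_closeIndices (δ := δ) hsep hn hk
  have hup : ∀ j ∈ closeIndices x n k δ, |arccos (x n j) - arccos (x n k)| ≤ √(π ^ 2 * δ / 2) :=
    fun j hj => by
      obtain ⟨-, hj, hclose⟩ := mem_closeIndices.1 hj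
      have := (two_div_pi_sq_mul_sq_arccos_sub_le_abs_sub (hmem n j hj) (hmem n k hk)).trans hclose
      refine abs_le_sqrt ?_
      rw [div_mul_eq_mul_div, div_le_iff₀ (by positivity)] at this
      linarith
  have hnpos : (0 : ℝ) < n := by exact_mod_cast hn
  calc (#(closeIndices x n k δ) : ℝ) ≤ 2 * √(π ^ 2 * δ / 2) / (c / n) :=
        card_le_two_mul_div_of_separated (by positivity) (sqrt_nonneg _) hlow hup hsep'
    _ = closeFraction c δ * n := by rw [closeFraction]; field_simp

lemma pow_le_closeProd (hc : 0 < c) (hmem : ∀ n, ∀ k < n, x n k ∈ Set.Icc (-1 : ℝ) 1)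
    (hsep : ArccosSeparated c x) (hn : 1 ≤ n) (hk : k < n) :
    (c ^ 2 / (2 * π ^ 2 * exp 1 ^ 2) * (#(closeIndices x n k δ) / n) ^ 2) ^ #(closeIndices x n k δ)
      ≤ closeProd x n k δ := by
  set J := closeIndices x n k δ
  set m := #J
  obtain ⟨hlow, hsep'⟩ := arccos_sub_separated_on_closeIndices (δ := δ) hsep hn hk
  have hnpos : (0 : ℝ) < n := by exact_mod_cast hn
  have hfac := factorial_mul_pow_le_prod_abs_of_separated (by positivity) hlow hsep'
  calc (c ^ 2 / (2 * π ^ 2 * exp 1 ^ 2) * (m / n) ^ 2) ^ m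
      = (2 / π ^ 2) ^ m * ((m / exp 1) ^ m * (c / n / 2) ^ m) ^ 2 := by
        rw [show c ^ 2 / (2 * π ^ 2 * exp 1 ^ 2) * (m / n) ^ 2
          = 2 / π ^ 2 * (m / exp 1 * (c / n / 2)) ^ 2 by field_simp, mul_pow, ← mul_pow (_ / exp 1),
          pow_right_comm]
    _ ≤ (2 / π ^ 2) ^ m * (m ! * (c / n / 2) ^ m) ^ 2 := by
        gcongr
        exact div_exp_one_pow_le_factorial m
    _ ≤ (2 / π ^ 2) ^ m * (∏ j ∈ J, |arccos (x n j) - arccos (x n k)|) ^ 2 :=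
        mul_le_mul_of_nonneg_left (pow_le_pow_left₀ (by positivity) hfac 2) (by positivity)
    _ = ∏ j ∈ J, 2 / π ^ 2 * (arccos (x n j) - arccos (x n k)) ^ 2 := by
        simp only [prod_mul_distrib, prod_const, ← prod_pow, sq_abs, J, m]
    _ ≤ closeProd x n k δ := prod_le_prod (fun _ _ => by positivity) fun j hj =>
        two_div_pi_sq_mul_sq_arccos_sub_le_abs_sub (hmem n j (mem_closeIndices.1 hj).2.1)
          (hmem n k hk)

lemma exp_neg_closeExponent_le_closeProd_rpow (hc : 0 < c)
    (hmem : ∀ n, ∀ k < n, x n k ∈ Set.Icc (-1 : ℝ) 1) (hsep : ArccosSeparated c x)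
    (hn : 1 ≤ n) (hk : k < n) :
    exp (-closeExponent c δ) ≤ closeProd x n k δ ^ (n : ℝ)⁻¹ := by
  set m := #(closeIndices x n k δ)
  set K := c ^ 2 / (2 * π ^ 2 * exp 1 ^ 2)
  have hnpos : (0 : ℝ) < n := by exact_mod_cast hn
  calc exp (-closeExponent c δ) ≤ (K * (m / n) ^ 2) ^ ((m : ℝ) / n) :=
        exp_neg_le_mul_sq_rpow_self (K := K) (by positivity) (by positivity)
          ((div_le_iff₀ hnpos).2 (card_closeIndices_le (δ := δ) hc hmem hsep hn hk))
    _ = ((K * (m / n) ^ 2) ^ m) ^ (n : ℝ)⁻¹ := by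
        rw [← rpow_natCast (K * _) m, ← rpow_mul (by positivity), div_eq_mul_inv]
    _ ≤ closeProd x n k δ ^ (n : ℝ)⁻¹ :=
        rpow_le_rpow (by positivity) (pow_le_closeProd hc hmem hsep hn hk) (by positivity)

end Row

lemma closeExponent_pos {c δ : ℝ} (hc : 0 < c) (hδ : 0 < δ) : 0 < closeExponent c δ := by
  have : 0 < closeFraction c δ := by unfold closeFraction; positivity
  unfold closeExponent
  positivity

lemma tendsto_closeExponent (c : ℝ) :
    Tendsto (closeExponent c) (nhdsWithin 0 (Set.Ioi 0)) (nhds 0) := by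
  have hcont : Continuous (closeExponent c) := by
    unfold closeExponent closeFraction
    fun_prop
  simpa [closeExponent, closeFraction] using hcont.tendsto 0 |>.mono_left nhdsWithin_le_nhds

/-- If a triangular array of points of `[-1,1]` satisfies the separation condition
`|arccos x_{n,j} - arccos x_{n,k}| ≥ c/n` for `j ≠ k`, then there exist constants
`c_δ > 0`, defined for all sufficiently small `δ > 0`, with `c_δ → 0` as `δ → 0⁺`,
such that `liminf_{n→∞} min_{1≤k≤n} S_{n,k,δ}^{1/n} ≥ e^{-c_δ}`. -/
theorem liminf_min_closeProd_rpow (c : ℝ) (hc : 0 < c) (x : ℕ → ℕ → ℝ)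
    (hmem : ∀ n, ∀ k < n, x n k ∈ Set.Icc (-1 : ℝ) 1)
    (hsep : ∀ n : ℕ, 1 ≤ n → ∀ j < n, ∀ k < n, j ≠ k →
      c / n ≤ |Real.arccos (x n j) - Real.arccos (x n k)|) :
    ∃ δ₀ : ℝ, 0 < δ₀ ∧ ∃ cδ : ℝ → ℝ,
      (∀ δ ∈ Set.Ioo (0 : ℝ) δ₀, 0 < cδ δ) ∧
      Tendsto cδ (nhdsWithin 0 (Set.Ioi 0)) (nhds 0) ∧
      ∀ δ ∈ Set.Ioo (0 : ℝ) δ₀,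
        Real.exp (-(cδ δ)) ≤
          Filter.liminf (fun n : ℕ =>
            sInf ((fun k => closeProd x n k δ ^ ((n : ℝ)⁻¹)) '' {k | k < n})) atTop := by
  refine ⟨1, one_pos, closeExponent c, fun δ hδ => closeExponent_pos hc hδ.1,
    tendsto_closeExponent c, fun δ hδ => ?_⟩
  have hbdd (n : ℕ) : BddBelow ((fun k => closeProd x n k δ ^ ((n : ℝ)⁻¹)) '' {k | k < n}) :=
    ⟨0, by rintro _ ⟨k, -, rfl⟩; exact rpow_nonneg closeProd_nonneg _⟩
  have hlow (n : ℕ) (hn : 1 ≤ n) :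
      exp (-closeExponent c δ) ≤ sInf ((fun k => closeProd x n k δ ^ ((n : ℝ)⁻¹)) '' {k | k < n}) :=
    le_csInf ⟨_, 0, hn, rfl⟩ <| by
      rintro _ ⟨k, hk, rfl⟩
      exact exp_neg_closeExponent_le_closeProd_rpow hc hmem hsep hn hk
  have hup (n : ℕ) (hn : 1 ≤ n) :
      sInf ((fun k => closeProd x n k δ ^ ((n : ℝ)⁻¹)) '' {k | k < n}) ≤ 1 :=
    (csInf_le (hbdd n) ⟨0, hn, rfl⟩).trans
      (rpow_le_one closeProd_nonneg (closeProd_le_one hδ.2.le) (by positivity))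
  exact le_liminf_of_le (isCoboundedUnder_ge_of_eventually_le atTop (eventually_atTop.2 ⟨1, hup⟩))
    (eventually_atTop.2 ⟨1, hlow⟩)
end
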